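/- arXiv:2511.21107 — 4 statements merged into one kernel-verified Lean document; each statement's English description precedes it below -/
import Mathlib

section
/- Let T be a sign-diagonal matrix, t : Fin n → ℝ, φ(x) = T.mulVec x + t, and fix j : Fin n with T j j = 1 and t j = (m : ℝ) for some integer m. Then for any x* : Fin n → ℝ, the image under φ of the down-branch subproblem P ∩ {x | x j ≤ ⌊x* j⌋} equals P̂ ∩ {x̂ | x̂ j ≤ ⌊(φ x*) j⌋}, and the image of the up-branch subproblem P ∩ {x | x j ≥ ⌈x* j⌉} equals P̂ ∩ {x̂ | x̂ j ≥ ⌈(φ x*) j⌉} (floors and ceilings taken in ℝ via Int.floor and Int.ceil). That is, when T j j = 1 the down/up branching constraints on x j correspond exactly to down/up branching constraints on x̂ j. -/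
/-!
The affine map `φ x = T x + t` is a bijection whose inverse is `y ↦ T (y - t)`, because a
sign-diagonal `T` satisfies `T * T = 1`. Hence `φ '' S` is the preimage of `S` under this
inverse: the preimage of `P` is `P̂` since `A (T (y - t)) = Â y - Â t`, and as `T j j = 1` the
`j`-th coordinate of the inverse is `y j - m`. Shifting by the integer `m` commutes with `⌊·⌋`
and `⌈·⌉`, so the branching bounds on `x j` become the same bounds on `x̂ j` computed at `φ x*`.
-/

open Matrix

namespace Matrix

variable {ι κ R : Type*} [Fintype ι]

theorem mulVec_apply_of_offDiag_eq_zero [NonUnitalNonAssocSemiring R] {T : Matrix ι ι R}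
    (hdiag : ∀ i j, i ≠ j → T i j = 0) (x : ι → R) (k : ι) : (T *ᵥ x) k = T k k * x k :=
  Fintype.sum_eq_single k fun i hi => by simp [hdiag k i (Ne.symm hi)]

theorem mul_self_eq_one_of_sign_diagonal [DecidableEq ι] [Ring R] {T : Matrix ι ι R}
    (hdiag : ∀ i j, i ≠ j → T i j = 0) (hsign : ∀ i, T i i = 1 ∨ T i i = -1) : T * T = 1 := by
  have hT : T = diagonal T.diag := (IsDiag.diagonal_diag fun i j hij => hdiag i j hij).symm
  rw [hT, diagonal_mul_diagonal, ← diagonal_one]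
  congr 1
  funext i
  rcases hsign i with h | h <;> simp [h]

theorem image_affine_eq_preimage [DecidableEq ι] [Ring R] {T : Matrix ι ι R} (hT : T * T = 1)
    (t : ι → R) (S : Set (ι → R)) :
    (fun x => T *ᵥ x + t) '' S = (fun y => T *ᵥ (y - t)) ⁻¹' S :=
  congrFun (Set.image_eq_preimage_of_inverse
    (fun x => by simp [mulVec_mulVec, hT])
    (fun y => by simp [mulVec_mulVec, hT])) S

theorem preimage_affine_setOf_mulVec_le [Ring R] [PartialOrder R] [IsOrderedAddMonoid R]
    (A : Matrix κ ι R) (b : κ → R) (T : Matrix ι ι R) (t : ι → R) :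
    (fun y => T *ᵥ (y - t)) ⁻¹' {x | ∀ i, (A *ᵥ x) i ≤ b i} =
      {y | ∀ i, ((A * T) *ᵥ y) i ≤ (b + (A * T) *ᵥ t) i} := by
  ext y
  simp [mulVec_mulVec, mulVec_sub]

end Matrix

/-- For a sign-diagonal affine map `φ(x) = T x + t` with `T j j = 1` and
`t j` an integer, `φ` maps the down-branch subproblem `P ∩ {x | x j ≤ ⌊x* j⌋}` onto
`P̂ ∩ {x̂ | x̂ j ≤ ⌊(φ x*) j⌋}` and the up-branch `P ∩ {x | x j ≥ ⌈x* j⌉}` onto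
`P̂ ∩ {x̂ | x̂ j ≥ ⌈(φ x*) j⌉}`. -/
theorem sign_diagonal_branching_correspondence_pos
    (n q : ℕ) (A : Matrix (Fin q) (Fin n) ℝ) (b : Fin q → ℝ)
    (T : Matrix (Fin n) (Fin n) ℝ)
    (hdiag : ∀ i j, i ≠ j → T i j = 0)
    (hsign : ∀ i, T i i = 1 ∨ T i i = -1)
    (t : Fin n → ℝ)
    (φ : (Fin n → ℝ) → (Fin n → ℝ))
    (hφ : ∀ x, φ x = T.mulVec x + t)
    (P : Set (Fin n → ℝ))
    (hP : P = {x | ∀ i, A.mulVec x i ≤ b i})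
    (Phat : Set (Fin n → ℝ))
    (hPhat : Phat = {xhat | ∀ i, (A * T).mulVec xhat i ≤ (b + (A * T).mulVec t) i})
    (j : Fin n) (hTj : T j j = 1) (m : ℤ) (htj : t j = (m : ℝ))
    (xstar : Fin n → ℝ) :
    φ '' (P ∩ {x | x j ≤ (⌊xstar j⌋ : ℝ)}) = Phat ∩ {xhat | xhat j ≤ (⌊φ xstar j⌋ : ℝ)} ∧
    φ '' (P ∩ {x | (⌈xstar j⌉ : ℝ) ≤ x j}) = Phat ∩ {xhat | (⌈φ xstar j⌉ : ℝ) ≤ xhat j} := by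
  obtain rfl : φ = fun x => T *ᵥ x + t := funext hφ
  subst hP hPhat
  have hcoord (x : Fin n → ℝ) : (T *ᵥ x) j = x j := by
    rw [mulVec_apply_of_offDiag_eq_zero hdiag, hTj, one_mul]
  simp only [image_affine_eq_preimage (mul_self_eq_one_of_sign_diagonal hdiag hsign),
    Set.preimage_inter, preimage_affine_setOf_mulVec_le]
  constructor <;> congr 1 <;> ext y <;>
    simp [hcoord, htj, Int.floor_add_intCast, Int.ceil_add_intCast,
      le_sub_iff_add_le]
end

section
/- Let T be a sign-diagonal matrix, t : Fin n → ℝ, φ(x) = T.mulVec x + t, and fix j : Fin n with T j j = -1 and t j = (m : ℝ) for some integer m. Let x* : Fin n → ℝ with x* j not an integer. Then the image under φ of the down-branch subproblem P ∩ {x | x j ≤ ⌊x* j⌋} equals the up-branch of the transformed problem P̂ ∩ {x̂ | x̂ j ≥ ⌈(φ x*) j⌉}, and the image of the up-branch P ∩ {x | x j ≥ ⌈x* j⌉} equals the down-branch P̂ ∩ {x̂ | x̂ j ≤ ⌊(φ x*) j⌋}. That is, when T j j = -1 the two branching directions are swapped under the transformation. -/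
open Matrix

/-- For a sign-diagonal affine map `φ(x) = T x + t` with `T j j = -1`,
`t j` an integer, and `x* j` not an integer, `φ` maps the down-branch subproblem
`P ∩ {x | x j ≤ ⌊x* j⌋}` onto the up-branch `P̂ ∩ {x̂ | x̂ j ≥ ⌈(φ x*) j⌉}` of the
transformed problem, and the up-branch `P ∩ {x | x j ≥ ⌈x* j⌉}` onto the down-branch
`P̂ ∩ {x̂ | x̂ j ≤ ⌊(φ x*) j⌋}`. -/
theorem sign_diagonal_branching_correspondence_neg
    (n q : ℕ) (A : Matrix (Fin q) (Fin n) ℝ) (b : Fin q → ℝ)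
    (T : Matrix (Fin n) (Fin n) ℝ)
    (hdiag : ∀ i j, i ≠ j → T i j = 0)
    (hsign : ∀ i, T i i = 1 ∨ T i i = -1)
    (t : Fin n → ℝ)
    (φ : (Fin n → ℝ) → (Fin n → ℝ))
    (hφ : ∀ x, φ x = T.mulVec x + t)
    (P : Set (Fin n → ℝ))
    (hP : P = {x | ∀ i, A.mulVec x i ≤ b i})
    (Phat : Set (Fin n → ℝ))
    (hPhat : Phat = {xhat | ∀ i, (A * T).mulVec xhat i ≤ (b + (A * T).mulVec t) i})
    (j : Fin n) (hTj : T j j = -1) (m : ℤ) (htj : t j = (m : ℝ))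
    (xstar : Fin n → ℝ) (hfrac : ¬ ∃ m' : ℤ, xstar j = (m' : ℝ)) :
    φ '' (P ∩ {x | x j ≤ (⌊xstar j⌋ : ℝ)}) = Phat ∩ {xhat | (⌈φ xstar j⌉ : ℝ) ≤ xhat j} ∧
    φ '' (P ∩ {x | (⌈xstar j⌉ : ℝ) ≤ x j}) = Phat ∩ {xhat | xhat j ≤ (⌊φ xstar j⌋ : ℝ)} := by

  have hTdiag : T = Matrix.diagonal (fun i => T i i) := by
    ext i k
    by_cases h : i = k
    · subst h; simp [Matrix.diagonal]
    · simp [Matrix.diagonal, h, hdiag i k h]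
  have hmv : ∀ (v : Fin n → ℝ) (i : Fin n), T.mulVec v i = T i i * v i := by
    intro v i
    conv_lhs => rw [hTdiag]
    simp [Matrix.mulVec_diagonal]
  have hTT : ∀ v : Fin n → ℝ, T.mulVec (T.mulVec v) = v := by
    intro v; funext i
    rw [hmv, hmv]
    rcases hsign i with h | h <;> rw [h] <;> ring
  have hφinv : ∀ y, φ (T.mulVec (y - t)) = y := by
    intro y
    rw [hφ, hTT]
    simp
  have hPiff : ∀ x, (φ x ∈ Phat ↔ x ∈ P) := by
    intro x
    rw [hφ, hP, hPhat]
    simp only [Set.mem_setOf_eq]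
    have key : ∀ i, (A * T).mulVec (T.mulVec x + t) i
        = A.mulVec x i + (A * T).mulVec t i := by
      intro i
      rw [Matrix.mulVec_add, ← Matrix.mulVec_mulVec, hTT]
      simp [Pi.add_apply]
    constructor
    · intro h i
      have := h i
      rw [key i, Pi.add_apply] at this
      linarith
    · intro h i
      rw [key i, Pi.add_apply]
      linarith [h i]
  have hφj : ∀ x : Fin n → ℝ, φ x j = -x j + (m : ℝ) := by
    intro x
    rw [hφ]
    simp only [Pi.add_apply]
    rw [hmv, hTj, htj]
    ring
  have hceil : (⌈φ xstar j⌉ : ℝ) = (m : ℝ) - (⌊xstar j⌋ : ℝ) := by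
    rw [hφj]
    have : ⌈-xstar j + (m : ℝ)⌉ = -⌊xstar j⌋ + m := by
      rw [Int.ceil_add_intCast, Int.ceil_neg]
    rw [this]; push_cast; ring
  have hfloor : (⌊φ xstar j⌋ : ℝ) = (m : ℝ) - (⌈xstar j⌉ : ℝ) := by
    rw [hφj]
    have : ⌊-xstar j + (m : ℝ)⌋ = -⌈xstar j⌉ + m := by
      rw [Int.floor_add_intCast, Int.floor_neg]
    rw [this]; push_cast; ring
  have hinvj : ∀ y : Fin n → ℝ, T.mulVec (y - t) j = (m : ℝ) - y j := by
    intro y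
    rw [hmv, hTj]
    simp [htj]
  constructor
  · ext y
    simp only [Set.mem_image, Set.mem_inter_iff, Set.mem_setOf_eq]
    constructor
    · rintro ⟨x, ⟨hxP, hxj⟩, rfl⟩
      refine ⟨(hPiff x).2 hxP, ?_⟩
      rw [hceil, hφj]
      linarith
    · rintro ⟨hy, hyj⟩
      refine ⟨T.mulVec (y - t), ⟨(hPiff _).1 (by rw [hφinv]; exact hy), ?_⟩, hφinv y⟩
      rw [hinvj]
      rw [hceil] at hyj
      linarith
  · ext y
    simp only [Set.mem_image, Set.mem_inter_iff, Set.mem_setOf_eq]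
    constructor
    · rintro ⟨x, ⟨hxP, hxj⟩, rfl⟩
      refine ⟨(hPiff x).2 hxP, ?_⟩
      rw [hfloor, hφj]
      linarith
    · rintro ⟨hy, hyj⟩
      refine ⟨T.mulVec (y - t), ⟨(hPiff _).1 (by rw [hφinv]; exact hy), ?_⟩, hφinv y⟩
      rw [hinvj]
      rw [hfloor] at hyj
      linarith
end

section
/- (Strong branching correspondence, case T j j = 1.) Let T be a sign-diagonal matrix, t : Fin n → ℝ, φ(x) = T.mulVec x + t, c : Fin n → ℝ, ĉ = T.mulVec c, γ = -(c ⬝ᵥ T.mulVec t), and fix j : Fin n with T j j = 1 and t j an integer. For any x* : Fin n → ℝ, the set of objective values of the original down-branch LP equals that of the transformed down-branch LP: {c ⬝ᵥ x | x ∈ P ∧ x j ≤ ⌊x* j⌋} = {ĉ ⬝ᵥ x̂ + γ | x̂ ∈ P̂ ∧ x̂ j ≤ ⌊(φ x*) j⌋}, and likewise for the up-branches with x j ≥ ⌈x* j⌉ and x̂ j ≥ ⌈(φ x*) j⌉. Consequently the optimal values (sInf of these value sets) of corresponding branches coincide, and hence the strong-branching bound improvements Δ↓ = z↓ − z* and Δ↑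 = z↑ − z*, and the strong-branching score Δ↓ + Δ↑, of variable j agree for the two problems. -/
open Matrix

/-- strong branching correspondence, case `T j j = 1`: the sets of
objective values of the original down- and up-branch LPs equal those of the corresponding
transformed branch LPs; consequently the branch optimal values coincide and
the strong-branching bound improvements and score of variable `j` agree. -/
theorem sign_diagonal_strong_branching_score_pos
    (n q : ℕ) (A : Matrix (Fin q) (Fin n) ℝ) (b : Fin q → ℝ) (c : Fin n → ℝ)
    (T : Matrix (Fin n) (Fin n) ℝ)
    (hdiag : ∀ i j, i ≠ j → T i j = 0)
    (hsign : ∀ i, T i i = 1 ∨ T i i = -1)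
    (t : Fin n → ℝ)
    (φ : (Fin n → ℝ) → (Fin n → ℝ))
    (hφ : ∀ x, φ x = T.mulVec x + t)
    (P : Set (Fin n → ℝ))
    (hP : P = {x | ∀ i, A.mulVec x i ≤ b i})
    (Phat : Set (Fin n → ℝ))
    (hPhat : Phat = {xhat | ∀ i, (A * T).mulVec xhat i ≤ (b + (A * T).mulVec t) i})
    (chat : Fin n → ℝ) (hchat : chat = T.mulVec c)
    (γ : ℝ) (hγ : γ = -(c ⬝ᵥ T.mulVec t))
    (j : Fin n) (hTj : T j j = 1) (m : ℤ) (htj : t j = (m : ℝ))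
    (xstar : Fin n → ℝ)
    -- objective-value sets of the original problem, its down-branch and up-branch
    (VP VDown VUp : Set ℝ)
    (hVP : VP = (fun x => c ⬝ᵥ x) '' P)
    (hVDown : VDown = (fun x => c ⬝ᵥ x) '' {x | x ∈ P ∧ x j ≤ (⌊xstar j⌋ : ℝ)})
    (hVUp : VUp = (fun x => c ⬝ᵥ x) '' {x | x ∈ P ∧ (⌈xstar j⌉ : ℝ) ≤ x j})
    -- objective-value sets of the transformed problem, its down-branch and up-branch
    (VPhat VDownHat VUpHat : Set ℝ)
    (hVPhat : VPhat = (fun xhat => chat ⬝ᵥ xhat + γ) '' Phat)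
    (hVDownHat : VDownHat =
      (fun xhat => chat ⬝ᵥ xhat + γ) '' {xhat | xhat ∈ Phat ∧ xhat j ≤ (⌊φ xstar j⌋ : ℝ)})
    (hVUpHat : VUpHat =
      (fun xhat => chat ⬝ᵥ xhat + γ) '' {xhat | xhat ∈ Phat ∧ (⌈φ xstar j⌉ : ℝ) ≤ xhat j}) :
    VDown = VDownHat ∧ VUp = VUpHat ∧
    sInf VDown = sInf VDownHat ∧ sInf VUp = sInf VUpHat ∧
    (sInf VDown - sInf VP) = (sInf VDownHat - sInf VPhat) ∧
    (sInf VUp - sInf VP) = (sInf VUpHat - sInf VPhat) ∧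
    (sInf VDown - sInf VP) + (sInf VUp - sInf VP) =
      (sInf VDownHat - sInf VPhat) + (sInf VUpHat - sInf VPhat) := by

  -- T is diagonal
  obtain ⟨d, hd⟩ : ∃ d : Fin n → ℝ, T = Matrix.diagonal d := by
    refine ⟨fun i => T i i, ?_⟩
    ext i k
    by_cases h : i = k
    · subst h; simp [Matrix.diagonal]
    · simp [Matrix.diagonal, h, hdiag i k h]
  have hTT : T * T = 1 := by
    rw [hd, Matrix.diagonal_mul_diagonal]
    have : (fun i => d i * d i) = fun _ => (1 : ℝ) := by
      funext i
      have := hsign i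
      rw [hd] at this
      simp [Matrix.diagonal] at this
      rcases this with h | h <;> rw [h] <;> ring
    rw [this, Matrix.diagonal_one]
  have hTsymm : Tᵀ = T := by rw [hd, Matrix.diagonal_transpose]
  have hinv : ∀ x : Fin n → ℝ, T.mulVec (T.mulVec x) = x := by
    intro x
    rw [Matrix.mulVec_mulVec, hTT, Matrix.one_mulVec]
  have hobj : ∀ x : Fin n → ℝ, chat ⬝ᵥ (T.mulVec x + t) + γ = c ⬝ᵥ x := by
    intro x
    have h1 : chat ⬝ᵥ (T.mulVec x + t) = c ⬝ᵥ T.mulVec (T.mulVec x + t) := by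
      have hdot : ∀ y : Fin n → ℝ, chat ⬝ᵥ y = c ⬝ᵥ T.mulVec y := by
        intro y
        rw [hchat]
        conv_lhs => rw [← hTsymm]
        rw [Matrix.mulVec_transpose, ← Matrix.dotProduct_mulVec]
      exact hdot _
    rw [h1, Matrix.mulVec_add, hinv, dotProduct_add, hγ]
    ring
  have hmem : ∀ x : Fin n → ℝ, x ∈ P ↔ (T.mulVec x + t) ∈ Phat := by
    intro x
    rw [hP, hPhat]
    simp only [Set.mem_setOf_eq]
    have hAT : ∀ i, (A * T).mulVec (T.mulVec x + t) i
        = A.mulVec x i + (A * T).mulVec t i := by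
      intro i
      rw [Matrix.mulVec_add, ← Matrix.mulVec_mulVec, hinv]
      simp [Matrix.mulVec_add]
    constructor
    · intro h i
      rw [hAT i]
      simp only [Pi.add_apply]
      linarith [h i]
    · intro h i
      have := h i
      rw [hAT i] at this
      simp only [Pi.add_apply] at this
      linarith
  have hcoord : ∀ x : Fin n → ℝ, (T.mulVec x + t) j = x j + (m : ℝ) := by
    intro x
    have : T.mulVec x j = x j := by
      rw [hd, Matrix.mulVec_diagonal]
      have : d j = 1 := by rw [hd] at hTj; simpa [Matrix.diagonal] using hTj
      rw [this, one_mul]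
    simp [this, htj]
  have hfloor : (⌊φ xstar j⌋ : ℝ) = (⌊xstar j⌋ : ℝ) + (m : ℝ) := by
    rw [hφ, hcoord]
    rw [show xstar j + (m : ℝ) = xstar j + (m : ℤ) by push_cast; ring, Int.floor_add_intCast]
    push_cast; ring
  have hceil : (⌈φ xstar j⌉ : ℝ) = (⌈xstar j⌉ : ℝ) + (m : ℝ) := by
    rw [hφ, hcoord]
    rw [show xstar j + (m : ℝ) = xstar j + (m : ℤ) by push_cast; ring, Int.ceil_add_intCast]
    push_cast; ring
  have hDown : VDown = VDownHat := by
    rw [hVDown, hVDownHat]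
    ext r
    constructor
    · rintro ⟨x, ⟨hx, hxj⟩, rfl⟩
      refine ⟨T.mulVec x + t, ⟨(hmem x).1 hx, ?_⟩, hobj x⟩
      rw [hcoord, hfloor]; linarith
    · rintro ⟨y, ⟨hy, hyj⟩, rfl⟩
      refine ⟨T.mulVec (y - t), ⟨?_, ?_⟩, ?_⟩
      · have hy' : T.mulVec (T.mulVec (y - t)) + t = y := by
          rw [hinv]; funext i; simp
        rw [hmem, hy']; exact hy
      · rw [hfloor] at hyj
        have : (T.mulVec (y - t)) j = y j - (m : ℝ) := by
          have := hcoord (T.mulVec (y - t))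
          rw [hinv] at this
          simp only [Pi.add_apply, Pi.sub_apply] at this
          linarith
        rw [this]; linarith
      · have hy' : T.mulVec (T.mulVec (y - t)) + t = y := by
          rw [hinv]; funext i; simp
        show c ⬝ᵥ T.mulVec (y - t) = chat ⬝ᵥ y + γ
        rw [← hobj (T.mulVec (y - t)), hy']
  have hUp : VUp = VUpHat := by
    rw [hVUp, hVUpHat]
    ext r
    constructor
    · rintro ⟨x, ⟨hx, hxj⟩, rfl⟩
      refine ⟨T.mulVec x + t, ⟨(hmem x).1 hx, ?_⟩, hobj x⟩
      rw [hcoord, hceil]; linarith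
    · rintro ⟨y, ⟨hy, hyj⟩, rfl⟩
      refine ⟨T.mulVec (y - t), ⟨?_, ?_⟩, ?_⟩
      · have hy' : T.mulVec (T.mulVec (y - t)) + t = y := by
          rw [hinv]; funext i; simp
        rw [hmem, hy']; exact hy
      · rw [hceil] at hyj
        have : (T.mulVec (y - t)) j = y j - (m : ℝ) := by
          have := hcoord (T.mulVec (y - t))
          rw [hinv] at this
          simp only [Pi.add_apply, Pi.sub_apply] at this
          linarith
        rw [this]; linarith
      · have hy' : T.mulVec (T.mulVec (y - t)) + t = y := by
          rw [hinv]; funext i; simp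
        show c ⬝ᵥ T.mulVec (y - t) = chat ⬝ᵥ y + γ
        rw [← hobj (T.mulVec (y - t)), hy']
  have hVPeq : VP = VPhat := by
    rw [hVP, hVPhat]
    ext r
    constructor
    · rintro ⟨x, hx, rfl⟩
      exact ⟨T.mulVec x + t, (hmem x).1 hx, hobj x⟩
    · rintro ⟨y, hy, rfl⟩
      have hy' : T.mulVec (T.mulVec (y - t)) + t = y := by
        rw [hinv]; funext i; simp
      refine ⟨T.mulVec (y - t), ?_, ?_⟩
      · rw [hmem, hy']; exact hy
      · show c ⬝ᵥ T.mulVec (y - t) = chat ⬝ᵥ y + γ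
        rw [← hobj (T.mulVec (y - t)), hy']
  refine ⟨hDown, hUp, by rw [hDown], by rw [hUp], by rw [hDown, hVPeq],
    by rw [hUp, hVPeq], by rw [hDown, hUp, hVPeq]⟩
end

section
/- (Strong branching correspondence, case T j j = -1.) Let T be a sign-diagonal matrix, t : Fin n → ℝ, φ(x) = T.mulVec x + t, c : Fin n → ℝ, ĉ = T.mulVec c, γ = -(c ⬝ᵥ T.mulVec t), and fix j : Fin n with T j j = -1 and t j an integer. Let x* : Fin n → ℝ with x* j not an integer. Then {c ⬝ᵥ x | x ∈ P ∧ x j ≤ ⌊x* j⌋} = {ĉ ⬝ᵥ x̂ + γ | x̂ ∈ P̂ ∧ x̂ j ≥ ⌈(φ x*) j⌉} and {c ⬝ᵥ x | x ∈ P ∧ x j ≥ ⌈x* j⌉} = {ĉ ⬝ᵥ x̂ + γ | x̂ ∈ P̂ ∧ x̂ j ≤ ⌊(φ x*) j⌋}. Consequently the optimal values of the down- and up-branches of variable j in the original LP equal the optimal values of the up- and down-branches, respectively, of variable j in the transformed LP, so the strong-branching score Δ↓ + Δ↑ of variable j is the same for both problems. -/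
open Matrix

/-- strong branching correspondence, case `T j j = -1`: the objective-value
set of the original down-branch equals that of the transformed up-branch and vice versa;
consequently the branch optimal values are swapped and the strong-branching score of
variable `j` is the same for both problems. -/
theorem sign_diagonal_strong_branching_score_neg
    (n q : ℕ) (A : Matrix (Fin q) (Fin n) ℝ) (b : Fin q → ℝ) (c : Fin n → ℝ)
    (T : Matrix (Fin n) (Fin n) ℝ)
    (hdiag : ∀ i j, i ≠ j → T i j = 0)
    (hsign : ∀ i, T i i = 1 ∨ T i i = -1)
    (t : Fin n → ℝ)
    (φ : (Fin n → ℝ) → (Fin n → ℝ))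
    (hφ : ∀ x, φ x = T.mulVec x + t)
    (P : Set (Fin n → ℝ))
    (hP : P = {x | ∀ i, A.mulVec x i ≤ b i})
    (Phat : Set (Fin n → ℝ))
    (hPhat : Phat = {xhat | ∀ i, (A * T).mulVec xhat i ≤ (b + (A * T).mulVec t) i})
    (chat : Fin n → ℝ) (hchat : chat = T.mulVec c)
    (γ : ℝ) (hγ : γ = -(c ⬝ᵥ T.mulVec t))
    (j : Fin n) (hTj : T j j = -1) (m : ℤ) (htj : t j = (m : ℝ))
    (xstar : Fin n → ℝ) (hfrac : ¬ ∃ m' : ℤ, xstar j = (m' : ℝ))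
    -- objective-value sets of the original problem, its down-branch and up-branch
    (VP VDown VUp : Set ℝ)
    (hVP : VP = (fun x => c ⬝ᵥ x) '' P)
    (hVDown : VDown = (fun x => c ⬝ᵥ x) '' {x | x ∈ P ∧ x j ≤ (⌊xstar j⌋ : ℝ)})
    (hVUp : VUp = (fun x => c ⬝ᵥ x) '' {x | x ∈ P ∧ (⌈xstar j⌉ : ℝ) ≤ x j})
    -- objective-value sets of the transformed problem, its down-branch and up-branch
    (VPhat VDownHat VUpHat : Set ℝ)
    (hVPhat : VPhat = (fun xhat => chat ⬝ᵥ xhat + γ) '' Phat)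
    (hVDownHat : VDownHat =
      (fun xhat => chat ⬝ᵥ xhat + γ) '' {xhat | xhat ∈ Phat ∧ xhat j ≤ (⌊φ xstar j⌋ : ℝ)})
    (hVUpHat : VUpHat =
      (fun xhat => chat ⬝ᵥ xhat + γ) '' {xhat | xhat ∈ Phat ∧ (⌈φ xstar j⌉ : ℝ) ≤ xhat j}) :
    VDown = VUpHat ∧ VUp = VDownHat ∧
    sInf VDown = sInf VUpHat ∧ sInf VUp = sInf VDownHat ∧
    (sInf VDown - sInf VP) + (sInf VUp - sInf VP) =
      (sInf VDownHat - sInf VPhat) + (sInf VUpHat - sInf VPhat) := by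
  set d : Fin n → ℝ := fun i => T i i with hd
  have hT : T = Matrix.diagonal d := by
    ext i k
    rcases eq_or_ne i k with rfl | h
    · simp [Matrix.diagonal_apply_eq, hd]
    · simp [Matrix.diagonal_apply_ne _ h, hdiag i k h]
  have hd2 : ∀ i, d i * d i = 1 := by
    intro i; rcases hsign i with h | h <;> simp [hd] at h ⊢ <;> rw [h] <;> norm_num
  have hinv : ∀ x : Fin n → ℝ, T.mulVec (T.mulVec x) = x := by
    intro x; ext i
    simp [hT, Matrix.mulVec_diagonal, ← mul_assoc, hd2 i]
  have hdot : ∀ u v : Fin n → ℝ, T.mulVec u ⬝ᵥ v = u ⬝ᵥ T.mulVec v := by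
    intro u v
    simp only [hT, dotProduct, Matrix.mulVec_diagonal]
    exact Finset.sum_congr rfl fun i _ => by ring
  -- value equality
  have hval : ∀ x : Fin n → ℝ, chat ⬝ᵥ (T.mulVec x + t) + γ = c ⬝ᵥ x := by
    intro x
    rw [hchat, hγ, dotProduct_add, hdot c (T.mulVec x), hinv,
      hdot c t]
    ring
  -- membership equivalence
  have hTT : A * T * T = A := by
    have h1 : T * T = 1 := by
      ext a b
      rcases eq_or_ne a b with rfl | hab
      · simp [hT, Matrix.diagonal_mul_diagonal, Matrix.diagonal_apply_eq, hd2 a]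
      · simp [hT, Matrix.diagonal_mul_diagonal, Matrix.diagonal_apply_ne _ hab,
          Matrix.one_apply_ne hab]
    rw [Matrix.mul_assoc, h1, Matrix.mul_one]
  have hmem : ∀ x : Fin n → ℝ, x ∈ P ↔ (T.mulVec x + t) ∈ Phat := by
    intro x
    rw [hP, hPhat]
    simp only [Set.mem_setOf_eq, Matrix.mulVec_add, Pi.add_apply, Matrix.mulVec_mulVec, hTT]
    constructor
    · intro h i; linarith [h i]
    · intro h i; linarith [h i]
  have hjcoord : ∀ x : Fin n → ℝ, (T.mulVec x) j = - x j := by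
    intro x
    simp [hT, Matrix.mulVec_diagonal]
    have : d j = -1 := hTj
    rw [this]; ring
  -- generic correspondence
  have key : ∀ S : ℝ → Prop,
      (fun x => c ⬝ᵥ x) '' {x | x ∈ P ∧ S (x j)} =
      (fun xh => chat ⬝ᵥ xh + γ) '' {xh | xh ∈ Phat ∧ S (t j - xh j)} := by
    intro S
    ext y
    constructor
    · rintro ⟨x, ⟨hxP, hxS⟩, rfl⟩
      refine ⟨T.mulVec x + t, ⟨(hmem x).1 hxP, ?_⟩, hval x⟩
      have : (T.mulVec x + t) j = - x j + t j := by
        simp [hjcoord x]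
      rw [this]
      simpa using hxS
    · rintro ⟨xh, ⟨hxhP, hxhS⟩, rfl⟩
      refine ⟨T.mulVec (xh - t), ⟨?_, ?_⟩, ?_⟩
      · apply (hmem _).2
        have : T.mulVec (T.mulVec (xh - t)) + t = xh := by
          rw [hinv]; ext i; simp
        rwa [this]
      · have h3 : (T.mulVec (xh - t)) j = t j - xh j := by
          rw [hjcoord]; simp only [Pi.sub_apply]; ring
        rw [h3]; exact hxhS
      · show c ⬝ᵥ (T.mulVec (xh - t)) = chat ⬝ᵥ xh + γ
        rw [← hval (T.mulVec (xh - t)), hinv]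
        congr 2
        ext i; simp
  -- φ xstar j value
  have hφj : φ xstar j = (m : ℝ) - xstar j := by
    rw [hφ]
    simp [hjcoord xstar, htj]
    ring
  have hceil : (⌈φ xstar j⌉ : ℝ) = (m : ℝ) - (⌊xstar j⌋ : ℝ) := by
    rw [hφj]
    have : ⌈(m : ℝ) - xstar j⌉ = m - ⌊xstar j⌋ := by
      rw [sub_eq_add_neg, add_comm, Int.ceil_add_intCast, Int.ceil_neg]
      ring
    rw [this]; push_cast; ring
  have hfloor : (⌊φ xstar j⌋ : ℝ) = (m : ℝ) - (⌈xstar j⌉ : ℝ) := by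
    rw [hφj]
    have : ⌊(m : ℝ) - xstar j⌋ = m - ⌈xstar j⌉ := by
      rw [sub_eq_add_neg, add_comm, Int.floor_add_intCast, Int.floor_neg]
      ring
    rw [this]; push_cast; ring
  -- the three set equalities
  have hP' : VP = VPhat := by
    rw [hVP, hVPhat]
    have h1 : P = {x | x ∈ P ∧ (fun _ : ℝ => True) (x j)} := by ext x; simp
    have h2 : Phat = {xh | xh ∈ Phat ∧ (fun _ : ℝ => True) (t j - xh j)} := by ext x; simp
    rw [h1, h2]
    exact key (fun _ => True)
  have hDU : VDown = VUpHat := by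
    rw [hVDown, hVUpHat]
    have hset : {xh : Fin n → ℝ | xh ∈ Phat ∧ t j - xh j ≤ (⌊xstar j⌋ : ℝ)} =
        {xh : Fin n → ℝ | xh ∈ Phat ∧ (⌈φ xstar j⌉ : ℝ) ≤ xh j} := by
      ext z
      simp only [Set.mem_setOf_eq, hceil, htj]
      constructor
      · rintro ⟨h1, h2⟩; exact ⟨h1, by linarith⟩
      · rintro ⟨h1, h2⟩; exact ⟨h1, by linarith⟩
    rw [key (fun r => r ≤ (⌊xstar j⌋ : ℝ)), hset]
  have hUD : VUp = VDownHat := by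
    rw [hVUp, hVDownHat]
    have hset : {xh : Fin n → ℝ | xh ∈ Phat ∧ (⌈xstar j⌉ : ℝ) ≤ t j - xh j} =
        {xh : Fin n → ℝ | xh ∈ Phat ∧ xh j ≤ (⌊φ xstar j⌋ : ℝ)} := by
      ext z
      simp only [Set.mem_setOf_eq, hfloor, htj]
      constructor
      · rintro ⟨h1, h2⟩; exact ⟨h1, by linarith⟩
      · rintro ⟨h1, h2⟩; exact ⟨h1, by linarith⟩
    rw [key (fun r => (⌈xstar j⌉ : ℝ) ≤ r), hset]
  refine ⟨hDU, hUD, by rw [hDU], by rw [hUD], by rw [hDU, hUD, hP']; ring⟩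
end
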